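/- arXiv:2301.13239 — 6 statements merged into one kernel-verified Lean document; each statement's English description precedes it below -/
import Mathlib

section
/- Let r ≥ 1 and 0 < a, b, c, d < r be integers, and suppose the Laurent polynomial identity z^{-c} + z^{r-c} + z^a + z^{a-r} + z^{c-a} + z^{d-b} = z^c + z^{c-r} + z^{-a} + z^{r-a} + z^{a-c} + z^{b-d} holds in ℤ[z, z^{-1}], together with the constraints a ≠ c and a < c. Then a contradiction follows; i.e., no such integers exist. -/
open LaurentPolynomial

/-
Both sides are sums of monomials with coefficient one, so the identity says that the multisets of
exponents agree. Membership alone then decides: `c - a` can only match `b - d`, after which `-c`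
forces `r = 2c`, `a` forces `c = 2a`, and `a - r = -3a` matches nothing on the right.
-/

namespace LaurentPolynomial

variable {R : Type*} [Semiring R]

theorem coeff_multiset_sum_map_T (s : Multiset ℤ) (n : ℤ) :
    ((s.map T).sum : R[T;T⁻¹]).coeff n = s.count n := by
  induction s using Multiset.induction_on with
  | empty => simp
  | cons m s ih =>
    rw [Multiset.map_cons, Multiset.sum_cons, AddMonoidAlgebra.coeff_add, Finsupp.add_apply,
      T_apply, ih, Multiset.count_cons]
    by_cases hmn : m = n
    · simp [hmn, add_comm]
    · simp [hmn, Ne.symm hmn]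

theorem multiset_sum_map_T_injective [CharZero R] :
    Function.Injective fun s : Multiset ℤ => ((s.map T).sum : R[T;T⁻¹]) := by
  intro s t h
  ext n
  have := congrArg (fun p : R[T;T⁻¹] => p.coeff n) h
  simpa only [coeff_multiset_sum_map_T, Nat.cast_inj] using this

end LaurentPolynomial

theorem ban_list_case3_general (r a b c d : ℤ) (ha : 0 < a) (hcr : c < r) (hlt : a < c)
    (hid : (T (-c) + T (r - c) + T a + T (a - r) + T (c - a) + T (d - b) :
        LaurentPolynomial ℤ)
      = T c + T (c - r) + T (-a) + T (r - a) + T (a - c) + T (b - d)) :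
    False := by
  have hexp : ({-c, r - c, a, a - r, c - a, d - b} : Multiset ℤ)
      = {c, c - r, -a, r - a, a - c, b - d} :=
    multiset_sum_map_T_injective (R := ℤ) (by simpa [add_assoc] using hid)
  have mem (x : ℤ) (hx : x ∈ ({-c, r - c, a, a - r, c - a, d - b} : Multiset ℤ)) :
      x = c ∨ x = c - r ∨ x = -a ∨ x = r - a ∨ x = a - c ∨ x = b - d := by
    rw [hexp] at hx
    simpa using hx
  have hbd : b - d = c - a := by have := mem (c - a) (by simp); omega
  have hrc : r = 2 * c := by have := mem (-c) (by simp); omega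
  have hca : c = 2 * a := by have := mem a (by simp); omega
  have := mem (a - r) (by simp)
  omega

theorem ban_list_case3 (r a b c d : ℤ) (hr : 1 ≤ r)
    (ha : 0 < a) (har : a < r) (hb : 0 < b) (hbr : b < r)
    (hc : 0 < c) (hcr : c < r) (hd : 0 < d) (hdr : d < r)
    (hac : a ≠ c) (hlt : a < c)
    (hid : (T (-c) + T (r - c) + T a + T (a - r) + T (c - a) + T (d - b) :
        LaurentPolynomial ℤ)
      = T c + T (c - r) + T (-a) + T (r - a) + T (a - c) + T (b - d)) :
    False :=
  ban_list_case3_general r a b c d ha hcr hlt hid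
end

section
/- Let r ≥ 1 and 0 < a, b < r be integers with a ≠ b, and suppose z^a + z^{a-r} + z^{-b} + z^{r-b} + z^{b-a} = z^{-a} + z^{r-a} + z^b + z^{b-r} + z^{a-b} in ℤ[z, z^{-1}]. Then a = b, a contradiction; hence no such a, b exist. -/
/-!
Apply the additive map summing the coefficients at positive exponents. Given `0 < a, b < r`,
each side has exactly two monomials with fixed positive exponent (`a`, `r - b` and `r - a`, `b`),
so the count reduces to `[a < b] = [b < a]`, forcing `a = b`.
-/

open LaurentPolynomial

namespace LaurentPolynomial

variable {R : Type*} [Semiring R]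

noncomputable def sumCoeffPos : R[T;T⁻¹] →+ R :=
  (Finsupp.liftAddHom fun n => if 0 < n then AddMonoidHom.id R else 0).comp
    AddMonoidAlgebra.coeffAddEquiv.toAddMonoidHom

theorem sumCoeffPos_T (n : ℤ) : sumCoeffPos (T n : R[T;T⁻¹]) = if 0 < n then 1 else 0 := by
  change Finsupp.liftAddHom _ (Finsupp.single n 1) = _
  rw [Finsupp.liftAddHom_apply_single]
  split_ifs <;> rfl

end LaurentPolynomial

theorem ban_list_case4_general (r a b : ℤ)
    (ha : 0 < a) (har : a < r) (hb : 0 < b) (hbr : b < r) (hab : a ≠ b)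
    (hid : (T a + T (a - r) + T (-b) + T (r - b) + T (b - a) :
        LaurentPolynomial ℤ)
      = T (-a) + T (r - a) + T b + T (b - r) + T (a - b)) :
    False := by
  have hcount := congrArg sumCoeffPos hid
  simp only [map_add, sumCoeffPos_T] at hcount
  split_ifs at hcount <;> omega

theorem ban_list_case4 (r a b : ℤ) (hr : 1 ≤ r)
    (ha : 0 < a) (har : a < r) (hb : 0 < b) (hbr : b < r) (hab : a ≠ b)
    (hid : (T a + T (a - r) + T (-b) + T (r - b) + T (b - a) :
        LaurentPolynomial ℤ)
      = T (-a) + T (r - a) + T b + T (b - r) + T (a - b)) :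
    False :=
  ban_list_case4_general r a b ha har hb hbr hab hid
end

section
/- Let r ≥ 1 be an integer, f, g polynomials in ℤ[z] with nonnegative coefficients, no constant term, and all exponents strictly between 0 and r, such that f(1)·g(1) is odd. If the Laurent polynomial identity z^a + z^{a-r} + f(z)g(z^{-1}) = z^{-a} + z^{r-a} + g(z)f(z^{-1}) holds for some 0 < a < r, then f(z)g(z^{-1}) contains a nonzero constant term z^0, i.e., f and g share a common monomial exponent. -/
open LaurentPolynomial Polynomial

noncomputable def Sw (c : ℤ → ℤ) : LaurentPolynomial ℤ →+ ℤ :=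
  (Finsupp.liftAddHom fun n => AddMonoidHom.mulLeft (c n)).comp
    AddMonoidAlgebra.coeffAddEquiv.toAddMonoidHom

lemma Sw_single (c : ℤ → ℤ) (n : ℤ) (v : ℤ) :
    Sw c (AddMonoidAlgebra.single n v) = c n * v :=
  Finsupp.liftAddHom_apply_single _ _ _

lemma Sw_T (c : ℤ → ℤ) (n : ℤ) : Sw c (T n : LaurentPolynomial ℤ) = c n := by
  simpa using Sw_single c n 1

lemma invert_single (n : ℤ) (v : ℤ) :
    invert (AddMonoidAlgebra.single n v : LaurentPolynomial ℤ) = AddMonoidAlgebra.single (-n) v := by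
  rw [single_eq_C_mul_T, map_mul, invert_C, invert_T, ← single_eq_C_mul_T]

lemma Sw_invert (c : ℤ → ℤ) (p : LaurentPolynomial ℤ) :
    Sw c (invert p) = Sw (fun n => c (-n)) p := by
  induction p using AddMonoidAlgebra.induction_linear with
  | zero => simp
  | add f g hf hg => rw [map_add, map_add, map_add, hf, hg]
  | single n v => rw [invert_single, Sw_single, Sw_single]

noncomputable def eps : LaurentPolynomial ℤ →ₐ[ℤ] ℤ :=
  AddMonoidAlgebra.lift ℤ ℤ ℤ 1

lemma eps_single (n : ℤ) (v : ℤ) : eps (AddMonoidAlgebra.single n v) = v := by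
  exact (AddMonoidAlgebra.lift_single (R := ℤ) (M := ℤ) (A := ℤ) 1 n v).trans (by simp)

lemma Sw_one (p : LaurentPolynomial ℤ) : Sw (fun _ => 1) p = eps p := by
  induction p using AddMonoidAlgebra.induction_linear with
  | zero => simp
  | add f g hf hg => rw [map_add, map_add, hf, hg]
  | single n v => rw [Sw_single, eps_single, one_mul]

lemma eps_toLaurent (q : Polynomial ℤ) : eps q.toLaurent = q.eval 1 := by
  induction q using Polynomial.induction_on' with
  | add p q hp hq => rw [map_add, map_add, hp, hq, eval_add]
  | monomial n t =>
      rw [Polynomial.toLaurent_C_mul_T, ← single_eq_C_mul_T, eps_single, eval_monomial, one_pow,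
        mul_one]

lemma eps_invert_toLaurent (q : Polynomial ℤ) : eps (invert q.toLaurent) = q.eval 1 := by
  induction q using Polynomial.induction_on' with
  | add p q hp hq => rw [map_add, map_add, map_add, hp, hq, eval_add]
  | monomial n t =>
      rw [Polynomial.toLaurent_C_mul_T, ← single_eq_C_mul_T, invert_single, eps_single,
        eval_monomial, one_pow, mul_one]

lemma toLaurent_coeff_nat (q : Polynomial ℤ) (m : ℕ) :
    (toLaurent q : LaurentPolynomial ℤ).coeff (m : ℤ) = q.coeff m := by
  rw [Polynomial.toLaurent_apply]
  exact Finsupp.mapDomain_apply Int.ofNat_injective q.toFinsupp.coeff m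

lemma toLaurent_coeff_neg (q : Polynomial ℤ) (n : ℤ) (hn : n < 0) :
    (toLaurent q : LaurentPolynomial ℤ).coeff n = 0 := by
  rw [Polynomial.toLaurent_apply]
  apply Finsupp.mapDomain_notin_range
  rintro ⟨m, rfl⟩
  omega

lemma Sw_decomp (p : LaurentPolynomial ℤ) :
    eps p = p.coeff 0 + Sw (fun n => if 0 < n then 1 else 0) p
      + Sw (fun n => if n < 0 then 1 else 0) p := by
  induction p using AddMonoidAlgebra.induction_linear with
  | zero => simp
  | add f g hf hg =>
      rw [map_add, map_add, map_add, hf, hg, AddMonoidAlgebra.coeff_add, Finsupp.add_apply]; ring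
  | single n v =>
      rw [eps_single, Sw_single, Sw_single, AddMonoidAlgebra.coeff_single, Finsupp.single_apply]
      rcases lt_trichotomy n 0 with h | h | h
      · rw [if_neg (by omega), if_neg (by omega), if_pos h]; ring
      · subst h; simp
      · rw [if_neg (by omega), if_pos h, if_neg (by omega)]; ring

theorem ban_list_case2 (r : ℤ) (hr : 1 ≤ r) (f g : Polynomial ℤ)
    (hf_nonneg : ∀ i, 0 ≤ f.coeff i) (hg_nonneg : ∀ i, 0 ≤ g.coeff i)
    (hf0 : f.coeff 0 = 0) (hg0 : g.coeff 0 = 0)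
    (hfdeg : ∀ i, f.coeff i ≠ 0 → (i : ℤ) < r)
    (hgdeg : ∀ i, g.coeff i ≠ 0 → (i : ℤ) < r)
    (hodd : Odd (f.eval 1 * g.eval 1))
    (a : ℤ) (ha : 0 < a) (har : a < r)
    (hid : (T a + T (a - r) : LaurentPolynomial ℤ)
        + f.toLaurent * invert g.toLaurent
      = T (-a) + T (r - a) + g.toLaurent * invert f.toLaurent) :
    ∃ p : ℕ, f.coeff p ≠ 0 ∧ g.coeff p ≠ 0 := by
  classical
  set h : LaurentPolynomial ℤ := f.toLaurent * invert g.toLaurent with hh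
  have hinv : g.toLaurent * invert f.toLaurent = invert h := by
    rw [hh, map_mul, involutive_invert g.toLaurent, mul_comm]
  set cpos : ℤ → ℤ := fun n => if 0 < n then 1 else 0 with hcpos
  set cneg : ℤ → ℤ := fun n => if n < 0 then 1 else 0 with hcneg
  -- balance of positive and negative parts
  have hbal : Sw cpos h = Sw cneg h := by
    have h1 := congrArg (Sw cpos) hid
    rw [hinv, map_add, map_add, map_add, map_add, Sw_T, Sw_T, Sw_T, Sw_T, Sw_invert] at h1
    have e1 : cpos a = 1 := if_pos ha
    have e2 : cpos (a - r) = 0 := if_neg (by omega)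
    have e3 : cpos (-a) = 0 := if_neg (by omega)
    have e4 : cpos (r - a) = 1 := if_pos (by omega)
    have e5 : (fun n => cpos (-n)) = cneg := by
      funext n; simp only [hcpos, hcneg]; exact if_congr (by omega) rfl rfl
    rw [e1, e2, e3, e4, e5] at h1
    omega
  -- the constant coefficient is odd
  have htot : eps h = f.eval 1 * g.eval 1 := by
    rw [hh, map_mul, eps_toLaurent, eps_invert_toLaurent]
  have hdec := Sw_decomp h
  rw [htot, ← hcpos, ← hcneg] at hdec
  obtain ⟨k, hk⟩ := hodd
  have h0ne : h.coeff 0 ≠ 0 := by omega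
  -- conclude
  by_contra hcon
  push_neg at hcon
  apply h0ne
  rw [hh, AddMonoidAlgebra.coeff_mul]
  apply Finset.sum_eq_zero
  intro a₁ ha₁
  apply Finset.sum_eq_zero
  intro a₂ ha₂
  rw [Finsupp.mem_support_iff] at ha₁
  dsimp only
  split
  · rename_i hsum
    have ha₁nn : 0 ≤ a₁ := by
      by_contra hneg
      exact ha₁ (toLaurent_coeff_neg f a₁ (by omega))
    have e6 : a₁ = ((a₁.toNat : ℕ) : ℤ) := by omega
    have e7 : (invert g.toLaurent).coeff a₂ = g.coeff a₁.toNat := by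
      rw [invert_apply]
      have : -a₂ = ((a₁.toNat : ℕ) : ℤ) := by omega
      rw [this, toLaurent_coeff_nat]
    rw [e7]
    rcases eq_or_ne (f.coeff a₁.toNat) 0 with hz | hz
    · rw [e6, toLaurent_coeff_nat, hz, zero_mul]
    · rw [hcon a₁.toNat hz, mul_zero]
  · rfl
end

section
/- Let r_1, r_2 ≥ 1 and 0 < a < r_2, 0 < b < r_1 be integers such that A_+(z) = [[1+z^{r_1}, -z^a],[-z^b, 1+z^{r_2}]] and A_-(z) = [[1+z^{r_1}, 0],[0, 1+z^{r_2}]] satisfy the symplectic property A_+(z)A_-(z^{-1})^T = A_-(z)A_+(z^{-1})^T. Then r_1 = r_2 = a + b. -/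
open LaurentPolynomial Matrix

theorem Apm_z_6_general (r₁ r₂ a b : ℤ)
    (ha : 0 < a) (hb : 0 < b)
    (hsymp :
      let Ap : Matrix (Fin 2) (Fin 2) (LaurentPolynomial ℤ) :=
        !![1 + T r₁, -T a; -T b, 1 + T r₂]
      let Am : Matrix (Fin 2) (Fin 2) (LaurentPolynomial ℤ) :=
        !![1 + T r₁, 0; 0, 1 + T r₂]
      Ap * (Am.map (invert (R := ℤ)))ᵀ = Am * (Ap.map (invert (R := ℤ)))ᵀ) :
    r₁ = r₂ ∧ r₁ = a + b := by
  have h01 : (1 + T (-r₂)) * T a = (1 + T r₁) * (T (-b) : ℤ[T;T⁻¹]) := by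
    simpa [mul_apply, Fin.sum_univ_two] using congrFun (congrFun hsymp 0) 1
  rw [add_mul, add_mul, one_mul, one_mul, ← T_add, ← T_add] at h01
  -- Two monomials determine their exponents up to order; `a > 0 > -b` forces
  -- `a = r₁ - b` and `a - r₂ = -b`.
  rcases (AddMonoidAlgebra.single_add_single_inj one_ne_zero one_ne_zero).mp h01 with
    ⟨h, -⟩ | ⟨-, h₁, h₂⟩ | ⟨h, -⟩
  · omega
  · omega
  · norm_num at h

theorem Apm_z_6 (r₁ r₂ a b : ℤ) (hr₁ : 1 ≤ r₁) (hr₂ : 1 ≤ r₂)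
    (ha : 0 < a) (har : a < r₂) (hb : 0 < b) (hbr : b < r₁)
    (hsymp :
      let Ap : Matrix (Fin 2) (Fin 2) (LaurentPolynomial ℤ) :=
        !![1 + T r₁, -T a; -T b, 1 + T r₂]
      let Am : Matrix (Fin 2) (Fin 2) (LaurentPolynomial ℤ) :=
        !![1 + T r₁, 0; 0, 1 + T r₂]
      Ap * (Am.map (invert (R := ℤ)))ᵀ = Am * (Ap.map (invert (R := ℤ)))ᵀ) :
    r₁ = r₂ ∧ r₁ = a + b :=
  Apm_z_6_general r₁ r₂ a b ha hb hsymp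
end

section
/- The sequence defined in the universal semifield ℚ_{>0}(y_1, y_2) by Y_1(0) = y_1, Y_2(0) = y_2 and the Y-system recursion Y_1(u)Y_1(u-2) = (1 + Y_2(u-1)^{-1})^{-1}, Y_2(u)Y_2(u-2) = (1 + Y_1(u-1)^{-1})^{-1} (with suitable initial data Y_1(1), Y_2(1) chosen freely as new variables) is periodic; in particular, for any positive real initial values the solution satisfies Y_i(u + 10) = Y_i(u) for all i ∈ {1,2} and u ∈ ℤ. -/
/-!
The recursion only couples `Y₁` at even times with `Y₂` at odd times (and vice versa), so each
of the two interleaved sequences `w` satisfies the one-term recursion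
`w u * w (u - 2) = (1 + (w (u - 1))⁻¹)⁻¹`. Its reciprocal `x = w⁻¹` then obeys the Lyness
(pentagon) recurrence `x (n + 2) * x n = 1 + x (n + 1)`, whose solutions have period `5`.
-/

open Function

theorem lyness_periodic {K : Type*} [Field K] {x : ℤ → K} (hx : ∀ n, x n ≠ 0)
    (h : ∀ n, x (n + 2) * x n = 1 + x (n + 1)) : Periodic x 5 := by
  intro n
  have h₀ := h n
  have h₁ := h (n + 1)
  have h₂ := h (n + 2)
  have h₃ := h (n + 3)
  ring_nf at h₀ h₁ h₂ h₃ ⊢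
  apply mul_left_cancel₀ (mul_ne_zero (hx (2 + n)) (hx (3 + n)))
  linear_combination x (2 + n) * h₃ + h₂ - x (3 + n) * h₀ - h₁

theorem periodic_ten_of_mul_eq_inv_one_add_inv {K : Type*} [Field K] {w : ℤ → K}
    (hw : ∀ u, w u ≠ 0) (h : ∀ u, w u * w (u - 2) = (1 + (w (u - 1))⁻¹)⁻¹) :
    Periodic w 10 := by
  have hx : Periodic (fun n ↦ (w n)⁻¹) 5 := by
    refine lyness_periodic (fun n ↦ inv_ne_zero (hw n)) fun n ↦ ?_
    have hn := h (n + 2)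
    rw [add_sub_cancel_right, add_sub_assoc, show (2 : ℤ) - 1 = 1 by norm_num] at hn
    rw [← mul_inv, hn, inv_inv]
  simpa using (hx.nat_mul 2).comp Inv.inv

def interleave {α : Type*} (f g : ℤ → α) (n : ℤ) : α := if Even n then f n else g n

theorem interleave_mul_eq {α : Type*} [Mul α] (F : α → α) {f g : ℤ → α}
    (hf : ∀ u, f u * f (u - 2) = F (g (u - 1))) (hg : ∀ u, g u * g (u - 2) = F (f (u - 1)))
    (u : ℤ) : interleave f g u * interleave f g (u - 2) = F (interleave f g (u - 1)) := by
  by_cases hu : Even u <;>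
    simp only [interleave, even_sub_two, Int.even_sub_one, hu, not_true, not_false_eq_true,
      if_true, if_false, hf, hg]

theorem Function.Periodic.of_interleave {α : Type*} {f g : ℤ → α} {p : ℤ} (hp : Even p)
    (hfg : Periodic (interleave f g) p) (hgf : Periodic (interleave g f) p) :
    Periodic f p ∧ Periodic g p := by
  constructor <;> intro n <;> by_cases hn : Even n
  all_goals
    first
    | simpa [interleave, hn, Int.even_add, hp] using hfg n
    | simpa [interleave, hn, Int.even_add, hp] using hgf n

theorem interleave_ne_zero {M₀ : Type*} [Zero M₀] {f g : ℤ → M₀} (hf : ∀ n, f n ≠ 0)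
    (hg : ∀ n, g n ≠ 0) (n : ℤ) : interleave f g n ≠ 0 := by
  unfold interleave
  split_ifs
  exacts [hf n, hg n]

theorem Ysystem_case1_periodic (Y₁ Y₂ : ℤ → ℝ)
    (hpos₁ : ∀ u, 0 < Y₁ u) (hpos₂ : ∀ u, 0 < Y₂ u)
    (hrec₁ : ∀ u : ℤ, Y₁ u * Y₁ (u - 2) = (1 + (Y₂ (u - 1))⁻¹)⁻¹)
    (hrec₂ : ∀ u : ℤ, Y₂ u * Y₂ (u - 2) = (1 + (Y₁ (u - 1))⁻¹)⁻¹) :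
    ∀ u : ℤ, Y₁ (u + 10) = Y₁ u ∧ Y₂ (u + 10) = Y₂ u := by
  have hne₁ : ∀ u, Y₁ u ≠ 0 := fun u ↦ (hpos₁ u).ne'
  have hne₂ : ∀ u, Y₂ u ≠ 0 := fun u ↦ (hpos₂ u).ne'
  have hperiod := Function.Periodic.of_interleave (by decide)
    (periodic_ten_of_mul_eq_inv_one_add_inv (interleave_ne_zero hne₁ hne₂)
      (interleave_mul_eq (fun y ↦ (1 + y⁻¹)⁻¹) hrec₁ hrec₂))
    (periodic_ten_of_mul_eq_inv_one_add_inv (interleave_ne_zero hne₂ hne₁)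
      (interleave_mul_eq (fun y ↦ (1 + y⁻¹)⁻¹) hrec₂ hrec₁))
  exact fun u ↦ ⟨hperiod.1 u, hperiod.2 u⟩
end

section
/- For all integers n ≥ 1, r ≥ 1, and a, the pair A_+(z) = [[[2]_r, -z^{a}],[-z^{r-a}[n]_{2r}, [2]_{(2n-1)r}]] and A_-(z) = [[[2]_r, 0],[-z^{2r-a}[n-1]_{2r}, [2]_{(2n-1)r}]] satisfies the symplectic property A_+(z)A_-(z^{-1})^T = A_-(z)A_+(z^{-1})^T over ℤ[z, z^{-1}]. -/
open LaurentPolynomial Matrix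

/-- The z-integer `[m]_s = 1 + z^s + ⋯ + z^{(m-1)s}` as a Laurent polynomial. -/
noncomputable def zIntL (m : ℕ) (s : ℤ) : LaurentPolynomial ℤ :=
  ∑ k ∈ Finset.range m, T (k * s)

lemma invert_zIntL (m : ℕ) (s : ℤ) : invert (zIntL m s) = zIntL m (-s) := by
  rw [zIntL, zIntL, map_sum]
  exact Finset.sum_congr rfl fun k _ => by rw [invert_T, mul_neg]

lemma zIntL_succ (m : ℕ) (s : ℤ) : zIntL (m+1) s = zIntL m s + T (m * s) :=
  Finset.sum_range_succ _ _

lemma zIntL_succ' (m : ℕ) (s : ℤ) : zIntL (m+1) s = 1 + T s * zIntL m s := by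
  rw [zIntL, Finset.sum_range_succ', zIntL, Finset.mul_sum]
  have h0 : T (((0:ℕ):ℤ) * s) = (1 : LaurentPolynomial ℤ) := by norm_num
  have hs : ∀ k ∈ Finset.range m,
      (T (((k+1:ℕ):ℤ) * s) : LaurentPolynomial ℤ) = T s * T ((k:ℤ) * s) := by
    intro k _
    rw [← T_add]; congr 1; push_cast; ring
  rw [Finset.sum_congr rfl hs, h0, add_comm]

lemma zIntL_two (s : ℤ) : zIntL 2 s = 1 + T s := by
  rw [zIntL, Finset.sum_range_succ, Finset.sum_range_one]
  simp

lemma zIntL_two_rev (s : ℤ) : zIntL 2 s = T s * zIntL 2 (-s) := by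
  rw [zIntL_two, zIntL_two, mul_add, mul_one, ← T_add]
  simp [add_comm]

lemma zIntL_rev (m : ℕ) (s : ℤ) :
    zIntL m s = T (((m : ℤ) - 1) * s) * zIntL m (-s) := by
  rcases m with _ | m
  · simp [zIntL]
  · rw [zIntL, zIntL, Finset.mul_sum,
      ← Finset.sum_range_reflect (fun k => T ((k : ℤ) * s)) (m+1)]
    apply Finset.sum_congr rfl
    intro k hk
    rw [Finset.mem_range] at hk
    rw [← T_add]
    congr 1
    have : ((m + 1 - 1 - k : ℕ) : ℤ) = (m : ℤ) - k := by omega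
    rw [this]; push_cast; ring

lemma zIntL_rev' (m : ℕ) (s : ℤ) :
    zIntL m (-s) = T (((m : ℤ) - 1) * (-s)) * zIntL m s := by
  simpa using zIntL_rev m (-s)

lemma zIntL_double (m : ℕ) (s : ℤ) :
    zIntL 2 s * zIntL m (2 * s) = zIntL (2 * m) s := by
  induction m with
  | zero => simp [zIntL]
  | succ m ih =>
    rw [zIntL_succ m (2*s), mul_add, ih, zIntL_two]
    have hR : zIntL (2*(m+1)) s
        = zIntL (2*m) s + T (((2*m : ℕ) : ℤ)*s) + T (((2*m+1 : ℕ) : ℤ)*s) := by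
      rw [show 2*(m+1) = (2*m+1)+1 from by ring, zIntL_succ, zIntL_succ]
    rw [hR,
      show ((2*m+1 : ℕ) : ℤ)*s = s + (m : ℤ)*(2*s) from by push_cast; ring,
      show ((2*m : ℕ) : ℤ)*s = (m : ℤ)*(2*s) from by push_cast; ring,
      T_add]
    ring

lemma zIntL_double' (m : ℕ) (s : ℤ) (x : LaurentPolynomial ℤ) :
    zIntL 2 s * (zIntL m (2*s) * x) = zIntL (2*m) s * x := by
  rw [← mul_assoc, zIntL_double]

lemma K1 (m : ℕ) (s t : ℤ) :
    zIntL 2 s * (zIntL m (-(2*s)) * T (t - 2*s)) + zIntL 2 (-((2*(m:ℤ)+1)*s)) * T t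
      = zIntL 2 s * (zIntL (m+1) (-(2*s)) * T (t - s)) := by
  rw [show (-(2*s) : ℤ) = 2*(-s) from by ring, zIntL_two_rev s]
  simp only [mul_assoc]
  rw [zIntL_double' m (-s), zIntL_double' (m+1) (-s)]
  rw [show 2*(m+1) = (2*m)+1+1 from by ring, zIntL_succ ((2*m)+1),
    zIntL_succ' (2*m) (-s), zIntL_two]
  simp only [mul_add, add_mul, one_mul, mul_one]
  simp only [← mul_assoc]
  ring_nf
  push_cast
  simp only [← T_add]
  ring_nf
  rw [mul_assoc (T s * zIntL (m*2) (-s)), ← T_add]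
  ring_nf

lemma K3 (m : ℕ) (r a : ℤ) :
    zIntL (m+1) (2*r) * T (r-a) * (zIntL m (-(2*r)) * T (a-2*r))
      = zIntL m (2*r) * T (2*r-a) * (zIntL (m+1) (-(2*r)) * T (a-r)) := by
  rw [zIntL_rev' m (2*r), zIntL_rev' (m+1) (2*r)]
  push_cast
  ring_nf
  have e : ∀ (x y z : ℤ) (A B : LaurentPolynomial ℤ),
      A * T x * T y * B * T z = (A * B) * T (x + y + z) := by
    intros; rw [T_add, T_add]; ring
  have f : ∀ (x y z : ℤ) (A B : LaurentPolynomial ℤ),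
      A * B * T x * T y * T z = (A * B) * T (x + y + z) := by
    intros; rw [T_add, T_add]; ring
  rw [e, f]
  ring_nf


theorem Apm_z_123_symplectic (n : ℕ) (hn : 1 ≤ n) (r a : ℤ) (hr : 1 ≤ r) :
    let Ap : Matrix (Fin 2) (Fin 2) (LaurentPolynomial ℤ) :=
      !![zIntL 2 r, -T a;
         -T (r - a) * zIntL n (2 * r), zIntL 2 ((2 * n - 1) * r)]
    let Am : Matrix (Fin 2) (Fin 2) (LaurentPolynomial ℤ) :=
      !![zIntL 2 r, 0;
         -T (2 * r - a) * zIntL (n - 1) (2 * r), zIntL 2 ((2 * n - 1) * r)]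
    Ap * (Am.map (invert (R := ℤ)))ᵀ = Am * (Ap.map (invert (R := ℤ)))ᵀ := by
  obtain ⟨m, rfl⟩ : ∃ m, n = m + 1 := ⟨n - 1, (Nat.succ_pred_eq_of_pos hn).symm⟩
  intro Ap Am
  refine Matrix.ext fun i j => ?_
  fin_cases i <;> fin_cases j <;>
    simp [Ap, Am, Matrix.mul_apply, Fin.sum_univ_two, invert_zIntL,
      _root_.map_mul, _root_.map_neg, Nat.add_sub_cancel]
  · -- (0,1)
    have h := K1 m r a
    push_cast at h ⊢
    ring_nf at h ⊢
    linear_combination -h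
  · -- (1,0)
    have h := K1 m (-r) (-a)
    push_cast at h ⊢
    ring_nf at h ⊢
    linear_combination h
  · -- (1,1)
    have h := K3 m r a
    push_cast at h ⊢
    ring_nf at h ⊢
    linear_combination h
end
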